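/- arXiv:math/0112069 — 2 statements merged into one kernel-verified Lean document; each statement's English description precedes it below -/
import Mathlib

section
/- Let M be a family of partial Meshalkin sequences of length p ≥ 1 in PG(n-1,q), i.e., tuples (a_1,…,a_p) of subspaces with dim(a_1 + ⋯ + a_p) = dim a_1 + ⋯ + dim a_p, such that each M_k (1 ≤ k ≤ p) contains no chain of length l. Then Σ_{a ∈ M} 1/([n choose r(â)]_q · [r(â); r(a)]_q · q^{s_2(r(a))}) ≤ l^p, where â = a_1 + ⋯ + a_p. -/
open Finset Module Submodule


open Finset

/-- The `q`-factorial `n!_q = (q^n - 1)(q^(n-1) - 1) ⋯ (q - 1)`. -/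
def qFact (q n : ℕ) : ℕ := ∏ i ∈ Finset.range n, (q ^ (i + 1) - 1)

/-- The Gaussian binomial coefficient `[n choose k]_q = n!_q / (k!_q (n-k)!_q)`. -/
noncomputable def gaussBinom (q n k : ℕ) : ℚ :=
  (qFact q n : ℚ) / ((qFact q k : ℚ) * (qFact q (n - k) : ℚ))

/-- The Gaussian multinomial coefficient `[n; α_1, …, α_p]_q = n!_q / (α_1!_q ⋯ α_p!_q)`. -/
noncomputable def gaussMultinomial (q n : ℕ) {p : ℕ} (α : Fin p → ℕ) : ℚ :=
  (qFact q n : ℚ) / ∏ i, (qFact q (α i) : ℚ)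

/-- The second elementary symmetric function `s_2(α) = ∑_{i<j} α_i α_j`. -/
def s2 {p : ℕ} (α : Fin p → ℕ) : ℕ :=
  ∑ i, ∑ j ∈ Finset.univ.filter (fun j : Fin p => i < j), α i * α j

/-- A family is `l`-chain-free if it contains no chain of length `l`, i.e. no `l + 1`
distinct pairwise comparable members. -/
def ChainFree {X : Type*} [PartialOrder X] (l : ℕ) (A : Set X) : Prop :=
  ¬ ∃ c : Fin (l + 1) → X, StrictMono c ∧ ∀ i, c i ∈ A

namespace MeshAux

/-- triangular number -/
def T (m : ℕ) : ℕ := ∑ i ∈ Finset.range m, i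

lemma T_add (a b : ℕ) : T (a + b) = T a + T b + a * b := by
  induction b with
  | zero => simp [T]
  | succ b ih =>
    have h1 : a + (b+1) = (a+b)+1 := by ring
    have h2 : T ((a+b)+1) = T (a+b) + (a+b) := Finset.sum_range_succ _ _
    have h3 : T (b+1) = T b + b := Finset.sum_range_succ _ _
    rw [h1, h2, ih, h3]
    ring

lemma s2_succ {p : ℕ} (α : Fin (p+1) → ℕ) :
    s2 α = α 0 * (∑ j : Fin p, α j.succ) + s2 (fun j : Fin p => α j.succ) := by
  unfold s2
  rw [Fin.sum_univ_succ]
  congr 1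
  · rw [Finset.sum_filter, Fin.sum_univ_succ, Finset.mul_sum]
    simp
  · refine Finset.sum_congr rfl fun i _ => ?_
    rw [Finset.sum_filter, Finset.sum_filter, Fin.sum_univ_succ]
    simp [Fin.succ_lt_succ_iff]

lemma T_sum_s2 {p : ℕ} (α : Fin p → ℕ) :
    T (∑ k, α k) = (∑ k, T (α k)) + s2 α := by
  induction p with
  | zero => simp [T, s2]
  | succ p ih =>
    rw [Fin.sum_univ_succ, T_add, ih (fun j => α j.succ), s2_succ, Fin.sum_univ_succ]
    ring

lemma qFact_pos {q : ℕ} (hq : 2 ≤ q) (n : ℕ) : 0 < qFact q n := by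
  refine Finset.prod_pos fun i _ => ?_
  have h1 : 2 ^ (i+1) ≤ q ^ (i+1) := Nat.pow_le_pow_left hq _
  have h2 : 2 ≤ 2 ^ (i+1) := Nat.le_self_pow (by omega) 2
  omega

/-- the number of linearly independent d-tuples in a d-dim space, as ℚ -/
lemma prod_sub_eq {q : ℕ} (hq : 2 ≤ q) (d : ℕ) :
    ((∏ i ∈ Finset.range d, (q ^ d - q ^ i) : ℕ) : ℚ) = (q : ℚ) ^ (T d) * (qFact q d : ℚ) := by
  have hle : ∀ i ∈ Finset.range d, q ^ i ≤ q ^ d := fun i hi =>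
    Nat.pow_le_pow_right (by omega) (by simpa using (Finset.mem_range.1 hi).le)
  rw [Nat.cast_prod]
  have hcast : ∀ i ∈ Finset.range d, ((q ^ d - q ^ i : ℕ) : ℚ) = (q:ℚ) ^ d - (q:ℚ) ^ i := by
    intro i hi
    push_cast [Nat.cast_sub (hle i hi)]
    ring
  rw [Finset.prod_congr rfl hcast]
  calc ∏ i ∈ Finset.range d, ((q:ℚ) ^ d - q ^ i)
      = ∏ i ∈ Finset.range d, ((q:ℚ) ^ i * ((q:ℚ) ^ (d - i) - 1)) := by
        refine Finset.prod_congr rfl fun i hi => ?_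
        have hi' : i ≤ d := (Finset.mem_range.1 hi).le
        rw [mul_sub, mul_one, ← pow_add]
        congr 2
        omega
    _ = (q:ℚ) ^ (T d) * ∏ i ∈ Finset.range d, ((q:ℚ) ^ (d - i) - 1) := by
        rw [Finset.prod_mul_distrib, Finset.prod_pow_eq_pow_sum]
        rfl
    _ = (q:ℚ) ^ (T d) * ∏ i ∈ Finset.range d, ((q:ℚ) ^ (i + 1) - 1) := by
        rw [← Finset.prod_range_reflect]
        congr 1
        refine Finset.prod_congr rfl fun i hi => ?_
        have : i < d := Finset.mem_range.1 hi
        congr 2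
        omega
    _ = _ := by
        congr 1
        rw [qFact, Nat.cast_prod]
        refine Finset.prod_congr rfl fun i hi => ?_
        have h2 : 1 ≤ q ^ (i+1) := Nat.one_le_pow _ _ (by omega)
        push_cast [Nat.cast_sub h2]
        ring


lemma alg_identity {q : ℕ} (hq : 2 ≤ q) {p : ℕ} (α : Fin p → ℕ) (n : ℕ)
    (hrn : (∑ k, α k) ≤ n) :
    (gaussBinom q n (∑ k, α k) * gaussMultinomial q (∑ k, α k) α * (q : ℚ) ^ (s2 α)) *
      (((∏ k, ∏ i ∈ Finset.range (α k), (q ^ (α k) - q ^ i))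
        * (q ^ (∑ k, α k)) ^ (n - ∑ k, α k)
        * ∏ i ∈ Finset.range (n - ∑ k, α k), (q ^ (n - ∑ k, α k) - q ^ i) : ℕ) : ℚ)
      = ((∏ i ∈ Finset.range n, (q ^ n - q ^ i) : ℕ) : ℚ) := by
  set r := ∑ k, α k with hrdef
  have hqF : ∀ m, (qFact q m : ℚ) ≠ 0 := fun m => Nat.cast_ne_zero.2 (qFact_pos hq m).ne'
  have hqFp : (∏ k, (qFact q (α k) : ℚ)) ≠ 0 := Finset.prod_ne_zero_iff.2 fun k _ => hqF _
  have hq0 : (q : ℚ) ≠ 0 := by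
    have h1 : (0:ℚ) < q := by exact_mod_cast (by omega : 0 < q)
    exact h1.ne'
  have hcast : (((∏ k, ∏ i ∈ Finset.range (α k), (q ^ (α k) - q ^ i))
        * (q ^ r) ^ (n - r)
        * ∏ i ∈ Finset.range (n - r), (q ^ (n - r) - q ^ i) : ℕ) : ℚ)
      = ((q:ℚ)^(∑ k, T (α k)) * ∏ k, (qFact q (α k) : ℚ))
        * (q:ℚ)^(r * (n - r))
        * ((q:ℚ)^(T (n - r)) * (qFact q (n - r) : ℚ)) := by
    rw [Nat.cast_mul, Nat.cast_mul, Nat.cast_prod]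
    congr 1
    · congr 1
      · rw [Finset.prod_congr rfl fun k _ => prod_sub_eq hq (α k),
          Finset.prod_mul_distrib, Finset.prod_pow_eq_pow_sum]
      · push_cast
        rw [← pow_mul]
    · exact prod_sub_eq hq (n - r)
  rw [hcast, prod_sub_eq hq n]
  have hTn : T n = s2 α + ((∑ k, T (α k)) + r * (n - r) + T (n - r)) := by
    have h4 : r + (n - r) = n := by omega
    have h5 := T_add r (n - r)
    rw [h4] at h5
    have h6 := T_sum_s2 α
    rw [← hrdef] at h6
    omega
  rw [hTn, pow_add, pow_add, pow_add]
  unfold gaussBinom gaussMultinomial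
  field_simp
  rw [div_eq_iff (mul_ne_zero (hqF r) (hqF (n - r)))]
  ring


end MeshAux

namespace MeshAux

attribute [local instance] Classical.propDecidable

variable {F V : Type*} [Field F] [AddCommGroup V] [Module F V]

/-- span of the window `[s, t)` of the tuple `v`. -/
noncomputable def Wspan {n : ℕ} (F : Type*) [Field F] [Module F V] (v : Fin n → V) (s t : ℕ) :
    Submodule F V :=
  Submodule.span F (v '' {i : Fin n | s ≤ i.val ∧ i.val < t})

lemma Wspan_mono {n : ℕ} (v : Fin n → V) (s : ℕ) {t t' : ℕ} (h : t ≤ t') :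
    Wspan F v s t ≤ Wspan F v s t' :=
  Submodule.span_mono (Set.image_mono (fun i hi => ⟨hi.1, lt_of_lt_of_le hi.2 h⟩))

lemma finrank_Wspan [FiniteDimensional F V] {n : ℕ} {v : Fin n → V}
    (hv : LinearIndependent F v) {s t : ℕ} (hst : s ≤ t) (htn : t ≤ n) :
    finrank F (Wspan F v s t) = t - s := by
  classical
  set S : Set (Fin n) := {i : Fin n | s ≤ i.val ∧ i.val < t} with hS
  have h1 : v '' S = Set.range (fun i : S => v i) := by
    rw [← Set.image_eq_range]
  have h2 : LinearIndependent F (fun i : S => v i) :=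
    hv.comp (Subtype.val : S → Fin n) Subtype.val_injective
  rw [Wspan, h1, finrank_span_eq_card h2]
  rw [Fintype.card_subtype]
  refine (Finset.card_nbij (fun i : Fin n => i.val) ?_ ?_ ?_ (t := Finset.Ico s t)).trans
    (Nat.card_Ico s t)
  · intro i hi
    have := Finset.mem_filter.1 hi
    exact Finset.mem_Ico.2 ⟨this.2.1, this.2.2⟩
  · intro i _ j _ hij
    exact Fin.val_injective hij
  · intro m hm
    have hm' := Finset.mem_Ico.1 (Finset.mem_coe.1 hm)
    refine ⟨⟨m, by omega⟩, ?_, rfl⟩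
    exact Finset.mem_coe.2 (Finset.mem_filter.2 ⟨Finset.mem_univ _, hm'.1, hm'.2⟩)

/-- The finset of possible right endpoints at a given start `s`. -/
noncomputable def Dset {n : ℕ} (Mk : Set (Submodule F V)) (v : Fin n → V) (s : ℕ) : Finset ℕ :=
  (Finset.range (n+1)).filter (fun t => s ≤ t ∧ Wspan F v s t ∈ Mk)

lemma mem_Dset {n : ℕ} {Mk : Set (Submodule F V)} {v : Fin n → V} {s t : ℕ} :
    t ∈ Dset Mk v s ↔ t < n + 1 ∧ s ≤ t ∧ Wspan F v s t ∈ Mk := by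
  unfold Dset
  simp [Finset.mem_filter, Finset.mem_range]

lemma card_Dset_le [FiniteDimensional F V] {n : ℕ} {v : Fin n → V}
    (hv : LinearIndependent F v) {Mk : Set (Submodule F V)} {l : ℕ}
    (hcf : ChainFree l Mk) (s : ℕ) : (Dset Mk v s).card ≤ l := by
  by_contra hcon
  push_neg at hcon
  obtain ⟨Tt, hTsub, hTcard⟩ := Finset.exists_subset_card_eq (Nat.succ_le_of_lt hcon)
  set g := Tt.orderEmbOfFin hTcard with hg
  have hgD : ∀ i, g i ∈ Dset Mk v s := fun i => hTsub (Tt.orderEmbOfFin_mem hTcard i)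
  have hprop : ∀ i, g i ≤ n ∧ s ≤ g i ∧ Wspan F v s (g i) ∈ Mk := by
    intro i
    have := Finset.mem_filter.1 (hgD i)
    have hr := Finset.mem_range.1 this.1
    exact ⟨by omega, this.2.1, this.2.2⟩
  refine hcf ⟨fun i => Wspan F v s (g i), ?_, fun i => (hprop i).2.2⟩
  intro i j hij
  have hgij : g i < g j := g.strictMono hij
  refine lt_of_le_of_ne (Wspan_mono v s hgij.le) ?_
  intro heq
  simp only at heq
  have h1 := finrank_Wspan (F := F) hv (hprop i).2.1 (hprop i).1
  have h2 := finrank_Wspan (F := F) hv (hprop j).2.1 (hprop j).1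
  rw [heq, h2] at h1
  have := (hprop i).2.1
  omega

/-- partial sums of dimensions -/
noncomputable def msum {p : ℕ} (F : Type*) [Field F] [Module F V] (a : Fin p → Submodule F V) (k : Fin p) : ℕ :=
  ∑ j ∈ Finset.univ.filter (fun j => j < k), finrank F (a j)

lemma msum_add_le {p : ℕ} (a : Fin p → Submodule F V) (k : Fin p) :
    msum F a k + finrank F (a k) ≤ ∑ j, finrank F (a j) := by
  have h1 : insert k (Finset.univ.filter (fun j => j < k)) ⊆ Finset.univ :=
    fun j _ => Finset.mem_univ j
  have h2 : k ∉ Finset.univ.filter (fun j => j < k) := by simp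
  calc msum F a k + finrank F (a k)
      = ∑ j ∈ insert k (Finset.univ.filter (fun j => j < k)), finrank F (a j) := by
        rw [Finset.sum_insert h2, msum, add_comm]
    _ ≤ ∑ j, finrank F (a j) := Finset.sum_le_sum_of_subset h1

/-- Key counting lemma for a fixed independent tuple `v`: the number of compatible
members of `M` is at most `l ^ p`. -/
lemma card_compat_le [FiniteDimensional F V] {n p l : ℕ}
    (M : Finset (Fin p → Submodule F V)) {v : Fin n → V}
    (hv : LinearIndependent F v)
    (hcf : ∀ k : Fin p, ChainFree l {b : Submodule F V | ∃ a ∈ M, a k = b})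
    (hsum : ∀ a ∈ M, (∑ j, finrank F (a j)) ≤ n) :
    (M.filter (fun a => ∀ k, a k =
        Wspan F v (msum F a k) (msum F a k + finrank F (a k)))).card ≤ l ^ p := by
  classical
  set Mk : Fin p → Set (Submodule F V) := fun k => {b | ∃ a ∈ M, a k = b} with hMk
  set MC := M.filter (fun a => ∀ k, a k =
      Wspan F v (msum F a k) (msum F a k + finrank F (a k))) with hMC
  have hmem : ∀ a ∈ MC, ∀ k, msum F a k + finrank F (a k) ∈ Dset (Mk k) v (msum F a k) := by
    intro a ha k
    have haM := (Finset.mem_filter.1 ha).1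
    have hac := (Finset.mem_filter.1 ha).2
    refine mem_Dset.2 ⟨?_, Nat.le_add_right _ _, ?_⟩
    · have := (msum_add_le a k).trans (hsum a haM)
      omega
    · exact ⟨a, haM, (hac k)⟩
  have key : MC.card ≤ (Fintype.piFinset (fun _ : Fin p => Finset.range l)).card := by
    refine Finset.card_le_card_of_injOn
      (fun a k => ((Dset (Mk k) v (msum F a k)).filter
        (fun t => t < msum F a k + finrank F (a k))).card) ?_ ?_
    · intro a ha
      refine Fintype.mem_piFinset.2 fun k => Finset.mem_range.2 ?_
      have h1 : ((Dset (Mk k) v (msum F a k)).filter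
          (fun t => t < msum F a k + finrank F (a k))) ⊂ Dset (Mk k) v (msum F a k) := by
        refine Finset.ssubset_iff_of_subset (Finset.filter_subset _ _) |>.2
          ⟨msum F a k + finrank F (a k), hmem a ha k, ?_⟩
        simp
      exact lt_of_lt_of_le (Finset.card_lt_card h1) (card_Dset_le hv (hcf k) _)
    · intro a ha b hb hfab
      have hkey : ∀ m : ℕ, ∀ k : Fin p, k.val = m → a k = b k := by
        intro m
        induction m using Nat.strong_induction_on with
        | _ m ih =>
          intro k hk
          have hprev : ∀ j, j < k → a j = b j := by
            intro j hj
            exact ih j.val (hk ▸ hj) j rfl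
          have hms : msum F a k = msum F b k :=
            Finset.sum_congr rfl fun j hj => by
              rw [hprev j (Finset.mem_filter.1 hj).2]
          set s := msum F a k with hsdef
          have hta := hmem a ha k
          have htb := hmem b hb k
          rw [← hms] at htb
          have hfk := congrFun hfab k
          simp only at hfk
          rw [← hms] at hfk
          -- show the two right endpoints coincide
          have hend : msum F a k + finrank F (a k) = msum F a k + finrank F (b k) := by
            by_contra hne
            have hgen : ∀ t1 t2 : ℕ, t1 ∈ Dset (Mk k) v s → t2 ∈ Dset (Mk k) v s →
                t1 < t2 →
                ((Dset (Mk k) v s).filter (fun t => t < t1)).card <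
                ((Dset (Mk k) v s).filter (fun t => t < t2)).card := by
              intro t1 t2 ht1 ht2 hlt
              refine Finset.card_lt_card ?_
              have hsub : ((Dset (Mk k) v s).filter (fun t => t < t1)) ⊆
                  ((Dset (Mk k) v s).filter (fun t => t < t2)) := by
                intro t ht
                have := Finset.mem_filter.1 ht
                exact Finset.mem_filter.2 ⟨this.1, lt_trans this.2 hlt⟩
              refine (Finset.ssubset_iff_of_subset hsub).2
                ⟨t1, Finset.mem_filter.2 ⟨ht1, hlt⟩, by simp⟩
            rcases lt_or_gt_of_ne hne with h | h
            · exact absurd hfk (Nat.ne_of_lt (hgen _ _ hta htb h))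
            · exact absurd hfk (Nat.ne_of_gt (hgen _ _ htb hta h))
          have hca := (Finset.mem_filter.1 ha).2 k
          have hcb := (Finset.mem_filter.1 hb).2 k
          rw [hca, hcb, ← hms, ← hend]
      funext k
      exact hkey k.val k rfl
  calc MC.card ≤ _ := key
    _ = l ^ p := by
      rw [Fintype.card_piFinset]
      simp


lemma msum_add_le' {p : ℕ} (a : Fin p → Submodule F V) {k k' : Fin p} (h : k < k') :
    msum F a k + finrank F (a k) ≤ msum F a k' := by
  have h2 : k ∉ Finset.univ.filter (fun j => j < k) := by simp
  have h1 : insert k (Finset.univ.filter (fun j => j < k)) ⊆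
      Finset.univ.filter (fun j => j < k') := by
    intro j hj
    rcases Finset.mem_insert.1 hj with rfl | hj
    · exact Finset.mem_filter.2 ⟨Finset.mem_univ _, h⟩
    · exact Finset.mem_filter.2 ⟨Finset.mem_univ _,
        lt_trans (Finset.mem_filter.1 hj).2 h⟩
  calc msum F a k + finrank F (a k)
      = ∑ j ∈ insert k (Finset.univ.filter (fun j => j < k)), finrank F (a j) := by
        rw [Finset.sum_insert h2, msum, add_comm]
    _ ≤ msum F a k' := Finset.sum_le_sum_of_subset h1

section Count

variable [Fintype F] [FiniteDimensional F V]

/-- The number of compatible independent tuples. -/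
theorem count_compat {p : ℕ} (a : Fin p → Submodule F V)
    (hmesh : finrank F ↥(⨆ i, a i) = ∑ i, finrank F (a i)) :
    Nat.card {v : Fin (finrank F V) → V // LinearIndependent F v ∧
        ∀ k, a k = Wspan F v (msum F a k) (msum F a k + finrank F (a k))}
      = (∏ k, ∏ i ∈ Finset.range (finrank F (a k)),
          (Fintype.card F ^ (finrank F (a k)) - Fintype.card F ^ i))
        * (Fintype.card F ^ (∑ k, finrank F (a k))) ^
            (finrank F V - ∑ k, finrank F (a k))
        * ∏ i ∈ Finset.range (finrank F V - ∑ k, finrank F (a k)),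
          (Fintype.card F ^ (finrank F V - ∑ k, finrank F (a k)) - Fintype.card F ^ i) := by
  classical
  have hfinV : Finite V := Module.finite_of_finite F
  set q := Fintype.card F with hq
  set n := finrank F V with hn
  set α : Fin p → ℕ := fun k => finrank F (a k) with hα
  set r := ∑ k, α k with hr
  set A : Submodule F V := ⨆ i, a i with hA
  have hrn : r ≤ n := hmesh ▸ Submodule.finrank_le A
  -- the index equivalence
  have hcardI0 : Fintype.card (Σ k : Fin p, Fin (α k)) = r := by
    simp [Fintype.card_sigma, hr]
  have hαdef : ∀ k, finrank F (a k) = α k := fun _ => rfl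
  have he0lt : ∀ kj : Σ k : Fin p, Fin (α k), msum F a kj.1 + kj.2.val < r := by
    intro kj
    have h1 := msum_add_le a kj.1
    rw [hαdef kj.1] at h1
    have h2 : kj.2.val < α kj.1 := kj.2.is_lt
    have h3 : (∑ j, finrank F (a j)) = r := rfl
    omega
  set e0 : (Σ k : Fin p, Fin (α k)) → Fin r := fun kj => ⟨msum F a kj.1 + kj.2.val, he0lt kj⟩
    with he0
  have he0inj : Function.Injective e0 := by
    rintro ⟨k, j⟩ ⟨k', j'⟩ hkj
    have hval : msum F a k + j.val = msum F a k' + j'.val := by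
      have := congrArg Fin.val hkj
      simpa [he0] using this
    have hkk' : k = k' := by
      by_contra hne
      rcases lt_or_gt_of_ne hne with h | h
      · have h1 := msum_add_le' a h
        rw [hαdef k] at h1
        have h2 := j.is_lt
        omega
      · have h1 := msum_add_le' a h
        rw [hαdef k'] at h1
        have h2 := j'.is_lt
        omega
    subst hkk'
    have : j = j' := Fin.ext (by omega)
    rw [this]
  have he0bij : Function.Bijective e0 :=
    (Fintype.bijective_iff_injective_and_card e0).2 ⟨he0inj, by simp [hcardI0]⟩
  have hrnn : r + (n - r) = n := by omega
  set E : ((Σ k : Fin p, Fin (α k)) ⊕ Fin (n - r)) ≃ Fin n :=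
    ((Equiv.ofBijective e0 he0bij).sumCongr (Equiv.refl (Fin (n - r)))).trans
      (finSumFinEquiv.trans (finCongr hrnn)) with hE
  have hEinl : ∀ kj : Σ k : Fin p, Fin (α k),
      (E (Sum.inl kj)).val = msum F a kj.1 + kj.2.val := by
    intro kj
    simp [hE, finSumFinEquiv, Fin.castAdd, Equiv.ofBijective]
    rfl
  -- transport of the window condition along E
  have hset : ∀ (u : ((Σ k : Fin p, Fin (α k)) ⊕ Fin (n - r)) → V) (k : Fin p),
      (u ∘ E.symm) '' {i : Fin n | msum F a k ≤ i.val ∧ i.val < msum F a k + α k}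
        = Set.range (fun j : Fin (α k) => u (Sum.inl ⟨k, j⟩)) := by
    intro u k
    ext x
    constructor
    · rintro ⟨i, hi, rfl⟩
      obtain ⟨hi1, hi2⟩ := hi
      have hj : i.val - msum F a k < α k := by omega
      refine ⟨⟨i.val - msum F a k, hj⟩, ?_⟩
      have hEi : E (Sum.inl ⟨k, ⟨i.val - msum F a k, hj⟩⟩) = i := by
        apply Fin.ext
        rw [hEinl]
        simp only
        omega
      exact congrArg u ((Equiv.eq_symm_apply E).2 hEi)
    · rintro ⟨j, rfl⟩
      refine ⟨E (Sum.inl ⟨k, j⟩), ⟨?_, ?_⟩, by simp⟩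
      · rw [hEinl]; exact Nat.le_add_right _ _
      · rw [hEinl]; have := j.is_lt; simp only; omega
  -- Step 1 : reindex
  have hcard1 : Nat.card {v : Fin n → V // LinearIndependent F v ∧
        ∀ k, a k = Wspan F v (msum F a k) (msum F a k + α k)}
      = Nat.card {u : ((Σ k : Fin p, Fin (α k)) ⊕ Fin (n - r)) → V //
          LinearIndependent F u ∧
        ∀ k, a k = Submodule.span F (Set.range (fun j : Fin (α k) => u (Sum.inl ⟨k, j⟩)))} := by
    refine (Nat.card_congr (Equiv.subtypeEquiv (Equiv.arrowCongr E (Equiv.refl V)) ?_)).symm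
    intro u
    have hu : (Equiv.arrowCongr E (Equiv.refl V)) u = u ∘ E.symm := rfl
    rw [hu]
    exact and_congr (linearIndependent_equiv E.symm).symm
      (forall_congr' fun k => by rw [Wspan, hset u k])
  -- span of a sigma family
  have hspanx : ∀ (x : (Σ k : Fin p, Fin (α k)) → V),
      (∀ k, Submodule.span F (Set.range fun j : Fin (α k) => x ⟨k, j⟩) = a k) →
      Submodule.span F (Set.range x) = A := by
    intro x hx
    rw [Set.range_sigma_eq_iUnion_range, Submodule.span_iUnion]
    exact iSup_congr hx
  -- span of coerced block families
  have hblockspan : ∀ (k : Fin p) (w : Fin (α k) → ↥(a k)), LinearIndependent F w →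
      Submodule.span F (Set.range fun j : Fin (α k) => (w j : V)) = a k := by
    intro k w hw
    have h1 : (fun j : Fin (α k) => (w j : V)) = (a k).subtype ∘ w := rfl
    rw [h1, Set.range_comp, ← Submodule.map_span]
    refine le_antisymm (Submodule.map_subtype_le _ _) ?_
    rcases Nat.eq_zero_or_pos (α k) with h0 | hpos
    · exact le_trans (le_of_eq (Submodule.finrank_eq_zero.1 ((hαdef k).trans h0))) bot_le
    · haveI : Nonempty (Fin (α k)) := ⟨⟨0, hpos⟩⟩
      rw [hw.span_eq_top_of_card_eq_finrank (by rw [Fintype.card_fin, hαdef k]),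
        Submodule.map_subtype_top]
  -- Step 2 : split into blocks and tail
  have hcard2 : Nat.card {u : ((Σ k : Fin p, Fin (α k)) ⊕ Fin (n - r)) → V //
          LinearIndependent F u ∧
        ∀ k, a k = Submodule.span F (Set.range (fun j : Fin (α k) => u (Sum.inl ⟨k, j⟩)))}
      = Nat.card ((Π k : Fin p, {w : Fin (α k) → ↥(a k) // LinearIndependent F w}) ×
          {t : Fin (n - r) → V // LinearIndependent F (A.mkQ ∘ t)}) := by
    refine Nat.card_congr ?_
    have hmemblk : ∀ (u : {u : ((Σ k : Fin p, Fin (α k)) ⊕ Fin (n - r)) → V //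
          LinearIndependent F u ∧
        ∀ k, a k = Submodule.span F (Set.range (fun j : Fin (α k) => u (Sum.inl ⟨k, j⟩)))})
        (k : Fin p) (j : Fin (α k)), u.1 (Sum.inl ⟨k, j⟩) ∈ a k := by
      intro u k j
      rw [u.2.2 k]
      exact Submodule.subset_span ⟨j, rfl⟩
    refine
      { toFun := fun u =>
          (fun k => ⟨fun j => ⟨u.1 (Sum.inl ⟨k, j⟩), hmemblk u k j⟩, ?hblk⟩,
           ⟨fun i => u.1 (Sum.inr i), ?htail⟩),
        invFun := fun wt => ⟨Sum.elim (fun kj : (Σ k : Fin p, Fin (α k)) =>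
            ((wt.1 kj.1).1 kj.2 : V)) wt.2.1, ?hind, ?hspans⟩,
        left_inv := ?hli, right_inv := ?hri }
    case hblk =>
      exact LinearIndependent.of_comp (a k).subtype
        (u.2.1.comp (fun j => Sum.inl ⟨k, j⟩)
          (Sum.inl_injective.comp sigma_mk_injective))
    case htail =>
      have hu' : LinearIndependent F (Sum.elim (u.1 ∘ Sum.inl) (u.1 ∘ Sum.inr)) := by
        rw [Sum.elim_comp_inl_inr]
        exact u.2.1
      obtain ⟨hil, hir, hdis⟩ := linearIndependent_sum.1 hu'
      have hfA : Submodule.span F (Set.range (u.1 ∘ Sum.inl)) = A :=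
        hspanx (u.1 ∘ Sum.inl) (fun k => (u.2.2 k).symm)
      refine hir.map ?_
      rw [Submodule.ker_mkQ, ← hfA]
      exact hdis.symm
    case hind =>
      set x : (Σ k : Fin p, Fin (α k)) → V :=
        fun kj => ((wt.1 kj.1).1 kj.2 : V) with hx
      have hxk : ∀ k, Submodule.span F (Set.range fun j : Fin (α k) => x ⟨k, j⟩) = a k :=
        fun k => hblockspan k (wt.1 k).1 (wt.1 k).2
      have hxspan : Submodule.span F (Set.range x) = A := hspanx x hxk
      have hxind : LinearIndependent F x := by
        refine linearIndependent_iff_card_eq_finrank_span.2 ?_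
        rw [hcardI0, Set.finrank, hxspan]
        exact hmesh.symm
      have htind : LinearIndependent F wt.2.1 := LinearIndependent.of_comp A.mkQ wt.2.2
      have hdisj2 : Disjoint (Submodule.span F (Set.range x))
          (Submodule.span F (Set.range wt.2.1)) := by
        rw [hxspan, disjoint_comm]
        rw [Submodule.disjoint_def]
        intro z hz hzA
        obtain ⟨c, hc⟩ := (mem_span_range_iff_exists_fun F).1 hz
        have hz0 : A.mkQ z = 0 := by
          rw [← Submodule.ker_mkQ A] at hzA
          exact hzA
        have hc0 : ∀ i, c i = 0 := by
          refine Fintype.linearIndependent_iff.1 wt.2.2 c ?_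
          rw [← hc] at hz0
          rw [← hz0]
          simp [map_sum, map_smul]
        rw [← hc]
        simp [hc0]
      refine linearIndependent_sum.2 ⟨?_, ?_, ?_⟩
      · rw [Sum.elim_comp_inl]; exact hxind
      · rw [Sum.elim_comp_inr]; exact htind
      · rw [Sum.elim_comp_inl, Sum.elim_comp_inr]; exact hdisj2
    case hspans =>
      intro k
      exact (hblockspan k (wt.1 k).1 (wt.1 k).2).symm
    case hli =>
      intro u
      apply Subtype.ext
      funext z
      rcases z with kj | i
      · rfl
      · rfl
    case hri =>
      intro wt
      refine Prod.ext ?_ ?_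
      · funext k
        apply Subtype.ext
        funext j
        rfl
      · apply Subtype.ext
        funext i
        rfl
  -- Step 3 : tail equivalence via a linear section of the quotient map
  obtain ⟨g, hg⟩ := A.mkQ.exists_rightInverse_of_surjective (Submodule.range_mkQ A)
  have hgapp : ∀ y, A.mkQ (g y) = y := fun y => by
    have := LinearMap.ext_iff.1 hg y
    simpa using this
  have hmk0 : ∀ z : ↥A, A.mkQ (z : V) = 0 := fun z => by
    rw [Submodule.mkQ_apply]
    exact (Submodule.Quotient.mk_eq_zero A).2 z.2
  have hcard3 : Nat.card {t : Fin (n - r) → V // LinearIndependent F (A.mkQ ∘ t)}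
      = Nat.card ({w : Fin (n - r) → V ⧸ A // LinearIndependent F w} × (Fin (n - r) → ↥A)) := by
    refine Nat.card_congr ?_
    refine
      { toFun := fun t => (⟨A.mkQ ∘ t.1, t.2⟩,
          fun i => ⟨t.1 i - g (A.mkQ (t.1 i)), ?hmem⟩),
        invFun := fun wc => ⟨fun i => g (wc.1.1 i) + (wc.2 i : V), ?hind2⟩,
        left_inv := ?hli2, right_inv := ?hri2 }
    case hmem =>
      refine (Submodule.Quotient.mk_eq_zero A).1 ?_
      rw [← Submodule.mkQ_apply, map_sub, hgapp, sub_self]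
    case hind2 =>
      have heq : A.mkQ ∘ (fun i => g (wc.1.1 i) + (wc.2 i : V)) = wc.1.1 := by
        funext i
        rw [Function.comp_apply, map_add, hgapp, hmk0, add_zero]
      rw [heq]
      exact wc.1.2
    case hli2 =>
      intro t
      apply Subtype.ext
      funext i
      show g (A.mkQ (t.1 i)) + (t.1 i - g (A.mkQ (t.1 i))) = t.1 i
      abel
    case hri2 =>
      intro wc
      refine Prod.ext ?_ ?_
      · apply Subtype.ext
        funext i
        show A.mkQ (g (wc.1.1 i) + (wc.2 i : V)) = wc.1.1 i
        rw [map_add, hgapp, hmk0, add_zero]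
      · funext i
        apply Subtype.ext
        show (g (wc.1.1 i) + (wc.2 i : V)) - g (A.mkQ (g (wc.1.1 i) + (wc.2 i : V))) = wc.2 i
        rw [map_add, hgapp, hmk0, add_zero, add_sub_cancel_left]
  -- cardinalities
  have hcardPi : Nat.card (Π k : Fin p, {w : Fin (α k) → ↥(a k) // LinearIndependent F w})
      = ∏ k, ∏ i ∈ Finset.range (α k), (q ^ (α k) - q ^ i) := by
    rw [Nat.card_pi]
    refine Finset.prod_congr rfl fun k _ => ?_
    haveI : Finite ↥(a k) := Module.finite_of_finite F
    rw [card_linearIndependent (le_of_eq (hαdef k).symm), hαdef k]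
    exact Fin.prod_univ_eq_prod_range (fun i => q ^ (α k) - q ^ i) (α k)
  have hquot : finrank F (V ⧸ A) = n - r := by
    have h1 := Submodule.finrank_quotient_add_finrank A
    rw [hmesh] at h1
    exact Nat.eq_sub_of_add_eq h1
  have hcardW : Nat.card {w : Fin (n - r) → V ⧸ A // LinearIndependent F w}
      = ∏ i ∈ Finset.range (n - r), (q ^ (n - r) - q ^ i) := by
    haveI : Finite (V ⧸ A) := Module.finite_of_finite F
    rw [card_linearIndependent (le_of_eq hquot.symm), hquot]
    exact Fin.prod_univ_eq_prod_range (fun i => q ^ (n - r) - q ^ i) (n - r)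
  have hcardJA : Nat.card (Fin (n - r) → ↥A) = (q ^ r) ^ (n - r) := by
    letI : Fintype V := Fintype.ofFinite V
    letI : Fintype ↥A := Fintype.ofFinite ↥A
    rw [Nat.card_fun, Nat.card_eq_fintype_card (α := ↥A),
      card_eq_pow_finrank (K := F) (V := ↥A), hmesh]
    simp [Nat.card_eq_fintype_card, hq]
  show Nat.card {v : Fin n → V // LinearIndependent F v ∧
        ∀ k, a k = Wspan F v (msum F a k) (msum F a k + α k)}
      = (∏ k, ∏ i ∈ Finset.range (α k), (q ^ (α k) - q ^ i))
        * (q ^ r) ^ (n - r) * ∏ i ∈ Finset.range (n - r), (q ^ (n - r) - q ^ i)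
  rw [hcard1, hcard2, Nat.card_prod, hcardPi, hcard3, Nat.card_prod, hcardW, hcardJA]
  ring

end Count


end MeshAux

/-- Generalized Rota–Harper theorem (LYM form) for partial Meshalkin sequences: if `M`
is a family of tuples `(a_1, …, a_p)` of subspaces with `dim(a_1 + ⋯ + a_p) = ∑ dim a_i`
and each `M_k` is `l`-chain-free, then
`∑_{a ∈ M} 1/([n choose r(â)]_q · [r(â); r(a)]_q · q^(s_2(r(a)))) ≤ l^p`,
where `â = a_1 + ⋯ + a_p`. -/
theorem partial_meshalkin_lym (q n l p : ℕ) (hl : 1 ≤ l) (hp : 1 ≤ p)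
    (F : Type*) [Field F] [Fintype F] (hq : Fintype.card F = q)
    (V : Type*) [AddCommGroup V] [Module F V] [FiniteDimensional F V]
    (hn : Module.finrank F V = n)
    (M : Finset (Fin p → Submodule F V))
    (hmesh : ∀ a ∈ M,
      Module.finrank F ↥(⨆ i, a i) = ∑ i, Module.finrank F (a i))
    (hcf : ∀ k : Fin p, ChainFree l {b : Submodule F V | ∃ a ∈ M, a k = b}) :
    ∑ a ∈ M, 1 / (gaussBinom q n (Module.finrank F ↥(⨆ i, a i)) *
        gaussMultinomial q (Module.finrank F ↥(⨆ i, a i))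
          (fun i => Module.finrank F (a i)) *
        (q : ℚ) ^ (s2 (fun i => Module.finrank F (a i)))) ≤ (l : ℚ) ^ p := by
  classical
  subst hq
  subst hn
  set q := Fintype.card F with hqdef
  set n := Module.finrank F V with hndef
  have hq2 : 2 ≤ q := Fintype.one_lt_card
  haveI hfinV : Finite V := Module.finite_of_finite F
  letI : Fintype V := Fintype.ofFinite V
  -- the compatibility predicate
  set P : (Fin p → Submodule F V) → (Fin n → V) → Prop := fun a v =>
    LinearIndependent F v ∧ ∀ k, a k = MeshAux.Wspan F v (MeshAux.msum F a k)
      (MeshAux.msum F a k + Module.finrank F (a k)) with hP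
  -- the number of independent n-tuples
  set N : ℕ := ∏ i ∈ Finset.range n, (q ^ n - q ^ i) with hNdef
  have hsum : ∀ a ∈ M, (∑ j, Module.finrank F (a j)) ≤ n :=
    fun a ha => (hmesh a ha) ▸ Submodule.finrank_le _
  have hNpos : 0 < N := by
    refine Finset.prod_pos fun i hi => ?_
    have hlt : q ^ i < q ^ n :=
      Nat.pow_lt_pow_right (by omega) (Finset.mem_range.1 hi)
    omega
  -- per-element count
  have hcount : ∀ a ∈ M,
      ((Finset.univ.filter (P a)).card : ℚ) *
        (gaussBinom q n (Module.finrank F ↥(⨆ i, a i)) *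
          gaussMultinomial q (Module.finrank F ↥(⨆ i, a i))
            (fun i => Module.finrank F (a i)) *
          (q : ℚ) ^ (s2 (fun i => Module.finrank F (a i)))) = (N : ℚ) := by
    intro a ha
    have hcard : (Finset.univ.filter (P a)).card = Nat.card {v : Fin n → V // P a v} := by
      rw [Nat.card_eq_fintype_card, Fintype.card_subtype]
    rw [hcard, MeshAux.count_compat a (hmesh a ha), hmesh a ha, mul_comm]
    exact MeshAux.alg_identity hq2 (fun i => Module.finrank F (a i)) n (hsum a ha)
  -- double counting
  have hswap : ∑ a ∈ M, (Finset.univ.filter (P a)).card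
      = ∑ v ∈ (Finset.univ : Finset (Fin n → V)), (M.filter (fun a => P a v)).card := by
    simp only [Finset.card_filter]
    rw [Finset.sum_comm]
  have hinner : ∀ v : Fin n → V, (M.filter (fun a => P a v)).card
      ≤ if LinearIndependent F v then l ^ p else 0 := by
    intro v
    by_cases hv : LinearIndependent F v
    · rw [if_pos hv]
      refine le_trans (Finset.card_le_card ?_) (MeshAux.card_compat_le M hv hcf hsum)
      intro a ha
      exact Finset.mem_filter.2 ⟨(Finset.mem_filter.1 ha).1,
        ((Finset.mem_filter.1 ha).2).2⟩
    · rw [if_neg hv]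
      refine le_of_eq (Finset.card_eq_zero.2 (Finset.filter_eq_empty_iff.2 ?_))
      intro a _ hPa
      exact hv hPa.1
  have hNInd : (Finset.univ.filter (fun v : Fin n → V => LinearIndependent F v)).card = N := by
    rw [← Fintype.card_subtype, ← Nat.card_eq_fintype_card,
      card_linearIndependent (le_refl n)]
    exact Fin.prod_univ_eq_prod_range (fun i => q ^ n - q ^ i) n
  have hS : ∑ a ∈ M, (Finset.univ.filter (P a)).card ≤ N * l ^ p := by
    rw [hswap]
    calc ∑ v ∈ (Finset.univ : Finset (Fin n → V)), (M.filter (fun a => P a v)).card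
        ≤ ∑ v ∈ (Finset.univ : Finset (Fin n → V)),
            (if LinearIndependent F v then l ^ p else 0) :=
          Finset.sum_le_sum fun v _ => hinner v
      _ = ∑ v ∈ (Finset.univ.filter (fun v : Fin n → V => LinearIndependent F v)), l ^ p := by
          rw [Finset.sum_filter]
      _ = N * l ^ p := by
          rw [Finset.sum_const, hNInd, smul_eq_mul]
  -- conclusion
  have hN0 : (N : ℚ) ≠ 0 := Nat.cast_ne_zero.2 hNpos.ne'
  have hterm : ∀ a ∈ M,
      1 / (gaussBinom q n (Module.finrank F ↥(⨆ i, a i)) *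
        gaussMultinomial q (Module.finrank F ↥(⨆ i, a i))
          (fun i => Module.finrank F (a i)) *
        (q : ℚ) ^ (s2 (fun i => Module.finrank F (a i))))
      = ((Finset.univ.filter (P a)).card : ℚ) / N := by
    intro a ha
    have h1 := hcount a ha
    set d : ℚ := gaussBinom q n (Module.finrank F ↥(⨆ i, a i)) *
        gaussMultinomial q (Module.finrank F ↥(⨆ i, a i))
          (fun i => Module.finrank F (a i)) *
        (q : ℚ) ^ (s2 (fun i => Module.finrank F (a i))) with hd
    have hd0 : d ≠ 0 := by
      intro h0
      rw [h0, mul_zero] at h1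
      exact hN0 h1.symm
    rw [div_eq_div_iff hd0 hN0, one_mul, ← h1]
  rw [Finset.sum_congr rfl hterm, ← Finset.sum_div, div_le_iff₀ (by positivity)]
  calc (∑ a ∈ M, ((Finset.univ.filter (P a)).card : ℚ))
      = ((∑ a ∈ M, (Finset.univ.filter (P a)).card : ℕ) : ℚ) := by push_cast; rfl
    _ ≤ ((N * l ^ p : ℕ) : ℚ) := by exact_mod_cast hS
    _ = (l : ℚ) ^ p * N := by push_cast; ring
end

section
/- Let M be a family of partial Meshalkin sequences of length p ≥ 1 in PG(n-1,q) (tuples (a_1,…,a_p) of subspaces with dim of the sum equal to the sum of dimensions) such that each M_k is an antichain. Then Σ_{a ∈ M} 1/([n choose r(â)]_q · [r(â); r(a)]_q · q^{s_2(r(a))}) ≤ 1, where â = a_1 + ⋯ + a_p and r denotes dimension. -/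
open Finset

section ArithAux

lemma qFact_pos {q : ℕ} (hq : 2 ≤ q) (k : ℕ) : 0 < qFact q k :=
  Finset.prod_pos fun i _ => by
    have : q ≤ q ^ (i + 1) := Nat.le_self_pow (by omega) q
    omega

lemma prod_pow_sub {q : ℕ} (hq : 2 ≤ q) (k : ℕ) :
    ∏ j ∈ range k, (q ^ k - q ^ j) = q ^ (∑ j ∈ range k, j) * qFact q k := by
  calc ∏ j ∈ range k, (q ^ k - q ^ j)
      = ∏ j ∈ range k, q ^ j * (q ^ (k - j) - 1) := by
        refine prod_congr rfl fun j hj => ?_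
        have hj' : j < k := mem_range.mp hj
        have h : q ^ k = q ^ j * q ^ (k - j) := by rw [← pow_add]; congr 1; omega
        rw [h, Nat.mul_sub, mul_one]
    _ = (∏ j ∈ range k, q ^ j) * ∏ j ∈ range k, (q ^ (k - j) - 1) := prod_mul_distrib
    _ = q ^ (∑ j ∈ range k, j) * qFact q k := by
        congr 1
        · exact prod_pow_eq_pow_sum _ _ _
        · rw [qFact, ← Finset.prod_range_reflect]
          refine prod_congr rfl fun j hj => ?_
          have hj' : j < k := mem_range.mp hj
          congr 2
          omega

lemma sq_sum_eq {p : ℕ} (α : Fin p → ℕ) :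
    (∑ i, α i) * (∑ i, α i) = ∑ i, α i * α i + 2 * s2 α := by
  rw [Finset.sum_mul_sum]
  have hsplit : ∀ i : Fin p, ∑ j, α i * α j =
      (∑ j ∈ univ.filter (fun j => i < j), α i * α j) +
        (α i * α i + ∑ j ∈ univ.filter (fun j => j < i), α i * α j) := by
    intro i
    rw [← Finset.sum_filter_add_sum_filter_not univ (fun j => i < j)]
    congr 1
    have h : univ.filter (fun j : Fin p => ¬ i < j) =
        insert i (univ.filter (fun j => j < i)) := by
      ext j
      simp only [mem_filter, mem_univ, true_and, mem_insert, not_lt]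
      constructor
      · intro h; rcases eq_or_lt_of_le h with h | h
        · exact Or.inl h
        · exact Or.inr h
      · rintro (rfl | h)
        · exact le_refl _
        · exact h.le
    rw [h, Finset.sum_insert (by simp)]
  rw [Finset.sum_congr rfl (fun i _ => hsplit i), Finset.sum_add_distrib, Finset.sum_add_distrib]
  have hswap : (∑ i : Fin p, ∑ j ∈ univ.filter (fun j => j < i), α i * α j) = s2 α := by
    calc (∑ i : Fin p, ∑ j ∈ univ.filter (fun j => j < i), α i * α j)
        = ∑ i : Fin p, ∑ j : Fin p, if j < i then α i * α j else 0 :=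
          sum_congr rfl fun i _ => Finset.sum_filter _ _
      _ = ∑ j : Fin p, ∑ i : Fin p, if j < i then α i * α j else 0 := Finset.sum_comm
      _ = ∑ j : Fin p, ∑ i ∈ univ.filter (fun i => j < i), α i * α j :=
          sum_congr rfl fun j _ => (Finset.sum_filter _ _).symm
      _ = s2 α := sum_congr rfl fun j _ => sum_congr rfl fun i _ => mul_comm _ _
  have hdef : (∑ i : Fin p, ∑ j ∈ univ.filter (fun j => i < j), α i * α j) = s2 α := rfl
  rw [hswap, hdef]
  omega

lemma T_add (m t : ℕ) :
    ∑ j ∈ range (m + t), j = (∑ j ∈ range m, j) + (∑ j ∈ range t, j) + m * t := by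
  induction t with
  | zero => simp
  | succ t ih =>
    rw [show m + (t + 1) = (m + t) + 1 from rfl, Finset.sum_range_succ, ih,
      Finset.sum_range_succ]
    ring

lemma T_sum {p : ℕ} (α : Fin p → ℕ) :
    ∑ j ∈ range (∑ i, α i), j = (∑ i, ∑ j ∈ range (α i), j) + s2 α := by
  have h2 : ∀ k : ℕ, 2 * (∑ j ∈ range k, j) + k = k * k := by
    intro k
    induction k with
    | zero => simp
    | succ k ih => rw [Finset.sum_range_succ]; nlinarith
  have hsq := sq_sum_eq α
  have h2m := h2 (∑ i, α i)
  rw [hsq] at h2m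
  have h2each : (∑ i, (2 * (∑ j ∈ range (α i), j) + α i)) = ∑ i, α i * α i :=
    sum_congr rfl fun i _ => h2 (α i)
  rw [Finset.sum_add_distrib, ← Finset.mul_sum] at h2each
  omega

end ArithAux

section LinAlgAux

open Module Submodule

variable {K V : Type*} [Field K] [AddCommGroup V] [Module K V] [FiniteDimensional K V]

lemma iSup_fin_succ' {p : ℕ} (a : Fin (p + 1) → Submodule K V) :
    (⨆ i, a i) = a 0 ⊔ ⨆ i : Fin p, a i.succ := by
  apply le_antisymm
  · exact iSup_le fun i =>
      Fin.cases le_sup_left (fun k => le_sup_of_le_right (le_iSup (fun i : Fin p => a i.succ) k)) i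
  · exact sup_le (le_iSup a 0) (iSup_le fun k => le_iSup a k.succ)

lemma finrank_iSup_le' : ∀ {p : ℕ} (a : Fin p → Submodule K V),
    finrank K ↥(⨆ i, a i) ≤ ∑ i, finrank K (a i) := by
  intro p
  induction p with
  | zero =>
    intro a
    rw [iSup_of_empty]
    simp
  | succ p ih =>
    intro a
    rw [iSup_fin_succ' a, Fin.sum_univ_succ]
    have h1 := Submodule.finrank_sup_add_finrank_inf_eq (a 0) (⨆ i : Fin p, a i.succ)
    have h2 := ih (fun i => a i.succ)
    omega

lemma concat_indep_span : ∀ {p : ℕ} (a : Fin p → Submodule K V),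
    finrank K ↥(⨆ i, a i) = (∑ i, finrank K (a i)) →
    ∀ (b : ∀ i, Fin (finrank K (a i)) → V),
    (∀ i j, b i j ∈ a i) → (∀ i, LinearIndependent K (b i)) →
    LinearIndependent K (fun s : Σ i, Fin (finrank K (a i)) => b s.1 s.2) ∧
      span K (Set.range fun s : Σ i, Fin (finrank K (a i)) => b s.1 s.2) = ⨆ i, a i := by
  intro p
  induction p with
  | zero =>
    intro a hr b hmem hind
    constructor
    · exact linearIndependent_empty_type
    · rw [Set.range_eq_empty, span_empty, iSup_of_empty]
  | succ p ih =>
    intro a hr b hmem hind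
    have hsup := iSup_fin_succ' a
    have hle := finrank_iSup_le' (fun i : Fin p => a i.succ)
    have h1 := Submodule.finrank_sup_add_finrank_inf_eq (a 0) (⨆ i : Fin p, a i.succ)
    rw [hsup] at hr
    rw [Fin.sum_univ_succ] at hr
    have hrank' : finrank K ↥(⨆ i : Fin p, a i.succ) = ∑ i : Fin p, finrank K (a i.succ) := by
      omega
    have hinf : finrank K ↥(a 0 ⊓ ⨆ i : Fin p, a i.succ) = 0 := by omega
    have hdisj : Disjoint (a 0) (⨆ i : Fin p, a i.succ) := by
      rw [disjoint_iff]
      exact Submodule.finrank_eq_zero.mp hinf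
    obtain ⟨hI, hSp⟩ := ih (fun i => a i.succ) hrank' (fun i => b i.succ)
      (fun i j => hmem i.succ j) (fun i => hind i.succ)
    have hb0le : span K (Set.range (b 0)) ≤ a 0 :=
      span_le.mpr (Set.range_subset_iff.mpr (hmem 0))
    have hb0 : span K (Set.range (b 0)) = a 0 := by
      apply Submodule.eq_of_le_of_finrank_le hb0le
      rw [finrank_span_eq_card (hind 0), Fintype.card_fin]
    -- equivalence
    have hcard : Fintype.card ((Σ i : Fin p, Fin (finrank K (a i.succ))) ⊕ Fin (finrank K (a 0)))
        = Fintype.card (Σ i : Fin (p + 1), Fin (finrank K (a i))) := by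
      simp [Fintype.card_sigma, Fin.sum_univ_succ, add_comm]
    have hginj : Function.Injective
        (Sum.elim (fun s : Σ i : Fin p, Fin (finrank K (a i.succ)) =>
            (⟨s.1.succ, s.2⟩ : Σ i : Fin (p + 1), Fin (finrank K (a i))))
          (fun j => ⟨0, j⟩)) := by
      rintro (⟨i, j⟩ | j) (⟨i', j'⟩ | j') h <;> simp only [Sum.elim_inl, Sum.elim_inr] at h
      · obtain ⟨h1, h2⟩ := Sigma.mk.inj_iff.mp h
        obtain rfl : i = i' := Fin.succ_injective _ h1
        rw [eq_of_heq h2]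
      · exact absurd (Sigma.mk.inj_iff.mp h).1 (Fin.succ_ne_zero i)
      · exact absurd (Sigma.mk.inj_iff.mp h).1 (Fin.succ_ne_zero i').symm
      · rw [eq_of_heq (Sigma.mk.inj_iff.mp h).2]
    let e : ((Σ i : Fin p, Fin (finrank K (a i.succ))) ⊕ Fin (finrank K (a 0))) ≃
        (Σ i : Fin (p + 1), Fin (finrank K (a i))) :=
      Equiv.ofBijective _ ((Fintype.bijective_iff_injective_and_card _).mpr ⟨hginj, hcard⟩)
    have hcomp : (fun s : Σ i : Fin (p + 1), Fin (finrank K (a i)) => b s.1 s.2) ∘ e =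
        Sum.elim (fun s : Σ i : Fin p, Fin (finrank K (a i.succ)) => b s.1.succ s.2) (b 0) := by
      funext z
      rcases z with (⟨i, j⟩ | j) <;> rfl
    have hIndSum : LinearIndependent K
        (Sum.elim (fun s : Σ i : Fin p, Fin (finrank K (a i.succ)) => b s.1.succ s.2) (b 0)) := by
      apply hI.sum_type (hind 0)
      rw [hSp, hb0]
      exact hdisj.symm
    have hInd : LinearIndependent K (fun s : Σ i : Fin (p + 1), Fin (finrank K (a i)) => b s.1 s.2) :=
      (linearIndependent_equiv e).mp (by rw [hcomp]; exact hIndSum)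
    refine ⟨hInd, ?_⟩
    have hrange : Set.range (fun s : Σ i : Fin (p + 1), Fin (finrank K (a i)) => b s.1 s.2) =
        Set.range (Sum.elim (fun s : Σ i : Fin p, Fin (finrank K (a i.succ)) => b s.1.succ s.2) (b 0)) := by
      rw [← hcomp]
      exact (e.surjective.range_comp _).symm
    rw [hrange, Set.Sum.elim_range, span_union, hSp, hb0, hsup, sup_comm]

lemma exists_block_finset [Fintype K] {p : ℕ} (a : Fin p → Submodule K V)
    (hr : finrank K ↥(⨆ i, a i) = ∑ i, finrank K (a i)) :
    ∃ S : Finset (Fin (finrank K V) → V),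
      S.card = (∏ i, ∏ j : Fin (finrank K (a i)),
            (Fintype.card K ^ finrank K (a i) - Fintype.card K ^ (j : ℕ))) *
          (Fintype.card K ^ ((∑ i, finrank K (a i)) * (finrank K V - ∑ i, finrank K (a i))) *
           ∏ j : Fin (finrank K V - ∑ i, finrank K (a i)),
            (Fintype.card K ^ (finrank K V - ∑ i, finrank K (a i)) - Fintype.card K ^ (j : ℕ))) ∧
      ∀ v ∈ S, LinearIndependent K v ∧
        ∀ i : Fin p, a i = span K (v '' {x : Fin (finrank K V) |
          (∑ k ∈ univ.filter (fun k => k < i), finrank K (a k)) ≤ (x : ℕ) ∧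
          (x : ℕ) < (∑ k ∈ univ.filter (fun k => k < i), finrank K (a k)) + finrank K (a i)}) := by
  classical
  haveI : Finite V := Module.finite_of_finite K
  haveI : Fintype V := Fintype.ofFinite V
  set q := Fintype.card K with hq
  set n := finrank K V with hn
  set α : Fin p → ℕ := fun i => finrank K (a i) with hα
  set m : ℕ := ∑ i, α i with hm
  set A : Submodule K V := ⨆ i, a i with hA
  have hmn : m ≤ n := hr ▸ A.finrank_le
  set t : ℕ := n - m with ht
  obtain ⟨c, hc⟩ := A.exists_isCompl
  have hct : finrank K c = t := by
    have h := Submodule.finrank_add_eq_of_isCompl hc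
    rw [← hn] at h
    omega
  set β : Fin p → ℕ := fun i => ∑ k ∈ univ.filter (fun k => k < i), α k with hβ
  have hstep : ∀ i : Fin p, β i + α i = ∑ k ∈ insert i (univ.filter (fun k => k < i)), α k := by
    intro i
    rw [Finset.sum_insert (by simp)]
    ring
  have hβ1 : ∀ i, β i + α i ≤ m := by
    intro i
    rw [hstep]
    exact Finset.sum_le_sum_of_subset (subset_univ _)
  have hβ2 : ∀ i i' : Fin p, i < i' → β i + α i ≤ β i' := by
    intro i i' hii
    rw [hstep]
    apply Finset.sum_le_sum_of_subset
    intro k hk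
    simp only [mem_insert, mem_filter, mem_univ, true_and] at hk ⊢
    rcases hk with rfl | hk
    · exact hii
    · exact hk.trans hii
  -- the sigma equivalence
  have hcardσ : Fintype.card (Σ i : Fin p, Fin (α i)) = m := by
    simp [Fintype.card_sigma]
    exact hm.symm
  let g : (Σ i : Fin p, Fin (α i)) → Fin m := fun s =>
    ⟨β s.1 + s.2, by have h1 := s.2.isLt; have h2 := hβ1 s.1; omega⟩
  have hginj : Function.Injective g := by
    rintro ⟨i, j⟩ ⟨i', j'⟩ h
    have hval : β i + (j : ℕ) = β i' + (j' : ℕ) := congrArg Fin.val h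
    rcases lt_trichotomy i i' with hlt | rfl | hlt
    · have := hβ2 i i' hlt; have := j.isLt; have := j'.isLt; omega
    · have : (j : ℕ) = (j' : ℕ) := by omega
      rw [show j = j' from Fin.ext this]
    · have := hβ2 i' i hlt; have := j.isLt; have := j'.isLt; omega
  let eσ : (Σ i : Fin p, Fin (α i)) ≃ Fin m :=
    Equiv.ofBijective g ((Fintype.bijective_iff_injective_and_card g).mpr
      ⟨hginj, by simp [hcardσ]⟩)
  let e : ((Σ i : Fin p, Fin (α i)) ⊕ Fin t) ≃ Fin n :=
    (Equiv.sumCongr eσ (Equiv.refl (Fin t))).trans (finSumFinEquiv.trans (finCongr (by omega)))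
  have he_inl : ∀ s : Σ i : Fin p, Fin (α i), ((e (Sum.inl s)) : ℕ) = β s.1 + s.2 := by
    intro s
    simp [e, eσ, g, finCongr_apply]
  -- the data type
  let Da := (∀ i : Fin p, {b : Fin (α i) → ↥(a i) // LinearIndependent K b}) ×
      ((Fin t → ↥A) × {u : Fin t → ↥c // LinearIndependent K u})
  haveI : Fintype Da := Fintype.ofFinite Da
  let Ψ : Da → (Fin n → V) := fun d =>
    (Sum.elim (fun s : Σ i : Fin p, Fin (α i) => ((d.1 s.1).1 s.2 : V))
      (fun j => (d.2.1 j : V) + (d.2.2.1 j : V))) ∘ e.symm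
  have hΨ_inl : ∀ d s, Ψ d (e (Sum.inl s)) = ((d.1 s.1).1 s.2 : V) := by
    intro d s
    simp [Ψ]
  have hΨ_inr : ∀ d j, Ψ d (e (Sum.inr j)) = (d.2.1 j : V) + (d.2.2.1 j : V) := by
    intro d j
    simp [Ψ]
  -- block data independence
  have hbmem : ∀ (d : Da) i j, ((d.1 i).1 j : V) ∈ a i := fun d i j => SetLike.coe_mem _
  have hbind : ∀ (d : Da) i, LinearIndependent K (fun j => ((d.1 i).1 j : V)) := by
    intro d i
    exact (d.1 i).2.map' (a i).subtype (ker_subtype _)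
  have huind : ∀ (d : Da), LinearIndependent K (fun j => ((d.2.2.1 j : V))) := by
    intro d
    exact d.2.2.2.map' c.subtype (ker_subtype _)
  have hconcat := fun d : Da => concat_indep_span a hr
    (fun i j => ((d.1 i).1 j : V)) (hbmem d) (hbind d)
  -- tail independence
  have hw_ind : ∀ d : Da, LinearIndependent K (fun j : Fin t => (d.2.1 j : V) + (d.2.2.1 j : V)) := by
    intro d
    have hu := (Fintype.linearIndependent_iff).mp (huind d)
    rw [Fintype.linearIndependent_iff]
    intro gco hgco
    have hsum0 : (∑ j, gco j • (d.2.1 j : V)) + ∑ j, gco j • (d.2.2.1 j : V) = 0 := by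
      rw [← Finset.sum_add_distrib]
      simpa [smul_add] using hgco
    have h1 : ∑ j, gco j • (d.2.2.1 j : V) ∈ c :=
      sum_mem fun j _ => smul_mem _ _ (SetLike.coe_mem _)
    have h2 : ∑ j, gco j • (d.2.2.1 j : V) ∈ A := by
      have : ∑ j, gco j • (d.2.2.1 j : V) = - ∑ j, gco j • (d.2.1 j : V) := by
        rw [eq_neg_iff_add_eq_zero, add_comm]
        exact hsum0
      rw [this]
      exact neg_mem (sum_mem fun j _ => smul_mem _ _ (SetLike.coe_mem _))
    exact hu gco (Submodule.disjoint_def.mp hc.disjoint _ h2 h1)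
  -- disjointness of spans
  have hdisj_spans : ∀ d : Da,
      Disjoint (span K (Set.range fun s : Σ i : Fin p, Fin (α i) => ((d.1 s.1).1 s.2 : V)))
        (span K (Set.range fun j : Fin t => (d.2.1 j : V) + (d.2.2.1 j : V))) := by
    intro d
    rw [(hconcat d).2]
    rw [Submodule.disjoint_def]
    intro z hzA hzw
    obtain ⟨gco, rfl⟩ := (mem_span_range_iff_exists_fun K).mp hzw
    have hu := (Fintype.linearIndependent_iff).mp (huind d)
    have h1 : ∑ j, gco j • (d.2.2.1 j : V) ∈ c :=
      sum_mem fun j _ => smul_mem _ _ (SetLike.coe_mem _)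
    have h2 : ∑ j, gco j • (d.2.2.1 j : V) ∈ A := by
      have heq : ∑ j, gco j • (d.2.2.1 j : V) =
          (∑ j, gco j • ((d.2.1 j : V) + (d.2.2.1 j : V))) - ∑ j, gco j • (d.2.1 j : V) := by
        rw [← Finset.sum_sub_distrib]
        congr 1
        funext j
        rw [smul_add]
        abel
      rw [heq]
      exact sub_mem hzA (sum_mem fun j _ => smul_mem _ _ (SetLike.coe_mem _))
    have hg0 := hu gco (Submodule.disjoint_def.mp hc.disjoint _ h2 h1)
    simp [hg0]
  have hv_ind : ∀ d : Da, LinearIndependent K (Ψ d) := by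
    intro d
    exact ((hconcat d).1.sum_type (hw_ind d) (hdisj_spans d)).comp e.symm e.symm.injective
  -- block span property
  have hblock : ∀ (d : Da) (i : Fin p), a i = span K ((Ψ d) ''
      {x : Fin n | β i ≤ (x : ℕ) ∧ (x : ℕ) < β i + α i}) := by
    intro d i
    have himg : (Ψ d) '' {x : Fin n | β i ≤ (x : ℕ) ∧ (x : ℕ) < β i + α i} =
        Set.range (fun j : Fin (α i) => ((d.1 i).1 j : V)) := by
      ext y
      constructor
      · rintro ⟨x, ⟨hx1, hx2⟩, rfl⟩
        obtain ⟨j, hj⟩ : ∃ j : Fin (α i), x = e (Sum.inl ⟨i, j⟩) := by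
          refine ⟨⟨(x : ℕ) - β i, by omega⟩, Fin.ext ?_⟩
          rw [he_inl]
          show (x : ℕ) = β i + ((x : ℕ) - β i)
          omega
        subst hj
        exact ⟨j, (hΨ_inl d ⟨i, j⟩).symm⟩
      · rintro ⟨j, rfl⟩
        refine ⟨e (Sum.inl ⟨i, j⟩), ?_, hΨ_inl d ⟨i, j⟩⟩
        have hj := j.isLt
        constructor <;> rw [he_inl] <;> simp <;> omega
    rw [himg]
    have hle : span K (Set.range fun j : Fin (α i) => ((d.1 i).1 j : V)) ≤ a i :=
      span_le.mpr (Set.range_subset_iff.mpr fun j => SetLike.coe_mem _)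
    refine (Submodule.eq_of_le_of_finrank_le hle ?_).symm
    rw [finrank_span_eq_card (hbind d i), Fintype.card_fin]
  -- injectivity
  have hΨinj : Function.Injective Ψ := by
    intro d d' hdd
    have h1 : ∀ s : Σ i : Fin p, Fin (α i), ((d.1 s.1).1 s.2 : V) = ((d'.1 s.1).1 s.2 : V) := by
      intro s
      have := congrFun hdd (e (Sum.inl s))
      rwa [hΨ_inl, hΨ_inl] at this
    have h2 : ∀ j, (d.2.1 j : V) + (d.2.2.1 j : V) = (d'.2.1 j : V) + (d'.2.2.1 j : V) := by
      intro j
      have := congrFun hdd (e (Sum.inr j))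
      rwa [hΨ_inr, hΨ_inr] at this
    have hb : d.1 = d'.1 :=
      funext fun i => Subtype.ext (funext fun j => Subtype.ext (h1 ⟨i, j⟩))
    have hxu : ∀ j, (d.2.1 j : V) = (d'.2.1 j : V) ∧ (d.2.2.1 j : V) = (d'.2.2.1 j : V) := by
      intro j
      have hmemA : (d.2.1 j : V) - (d'.2.1 j : V) ∈ A :=
        sub_mem (SetLike.coe_mem _) (SetLike.coe_mem _)
      have hmemc : (d.2.1 j : V) - (d'.2.1 j : V) ∈ c := by
        have heq : (d.2.1 j : V) - (d'.2.1 j : V) = (d'.2.2.1 j : V) - (d.2.2.1 j : V) :=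
          sub_eq_sub_iff_add_eq_add.mpr ((h2 j).trans (add_comm _ _))
        rw [heq]
        exact sub_mem (SetLike.coe_mem _) (SetLike.coe_mem _)
      have h0 : (d.2.1 j : V) - (d'.2.1 j : V) = 0 :=
        Submodule.disjoint_def.mp hc.disjoint _ hmemA hmemc
      have hx : (d.2.1 j : V) = (d'.2.1 j : V) := sub_eq_zero.mp h0
      refine ⟨hx, ?_⟩
      have := h2 j
      rw [hx] at this
      exact add_left_cancel this
    have hx : d.2.1 = d'.2.1 := funext fun j => Subtype.ext (hxu j).1
    have hu2 : d.2.2 = d'.2.2 := Subtype.ext (funext fun j => Subtype.ext (hxu j).2)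
    have h2eq : d.2 = d'.2 := Prod.ext_iff.mpr ⟨hx, hu2⟩
    exact Prod.ext_iff.mpr ⟨hb, h2eq⟩
  -- cardinality
  have hcA : Nat.card ↥A = q ^ m := by
    rw [Nat.card_eq_fintype_card, card_eq_pow_finrank (K := K) (V := ↥A), hr]
  have hcard : Fintype.card Da =
      (∏ i, ∏ j : Fin (α i), (q ^ α i - q ^ (j : ℕ))) *
        (q ^ (m * t) * ∏ j : Fin t, (q ^ t - q ^ (j : ℕ))) := by
    rw [← Nat.card_eq_fintype_card, Nat.card_prod, Nat.card_prod, Nat.card_pi]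
    congr 1
    · refine Finset.prod_congr rfl fun i _ => ?_
      exact card_linearIndependent (K := K) (V := ↥(a i)) (le_refl _)
    · congr 1
      · rw [Nat.card_fun, hcA, Nat.card_eq_fintype_card, Fintype.card_fin, ← pow_mul]
      · have := card_linearIndependent (K := K) (V := ↥c) (k := t) (le_of_eq hct.symm)
        rw [this, hct]
  refine ⟨(Finset.univ : Finset Da).image Ψ, ?_, ?_⟩
  · rw [Finset.card_image_of_injective _ hΨinj, Finset.card_univ, hcard]
  · intro v hv
    obtain ⟨d, -, rfl⟩ := Finset.mem_image.mp hv
    exact ⟨hv_ind d, fun i => hblock d i⟩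

end LinAlgAux

lemma final_algebra {q n p : ℕ} (hq2 : 2 ≤ q) (α : Fin p → ℕ) (hmn : (∑ i, α i) ≤ n) :
    (1 : ℚ) / (gaussBinom q n (∑ i, α i) * gaussMultinomial q (∑ i, α i) α * (q : ℚ) ^ s2 α) =
      (((∏ i, ∏ j : Fin (α i), (q ^ α i - q ^ (j : ℕ))) *
        (q ^ ((∑ i, α i) * (n - ∑ i, α i)) *
          ∏ j : Fin (n - ∑ i, α i), (q ^ (n - ∑ i, α i) - q ^ (j : ℕ))) : ℕ) : ℚ) /
      (((∏ j : Fin n, (q ^ n - q ^ (j : ℕ))) : ℕ) : ℚ) := by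
  have hFin : ∀ k : ℕ, (∏ j : Fin k, (q ^ k - q ^ (j : ℕ))) =
      q ^ (∑ j ∈ range k, j) * qFact q k := by
    intro k
    rw [← prod_pow_sub hq2 k]
    exact Fin.prod_univ_eq_prod_range (fun j => q ^ k - q ^ j) k
  simp only [gaussBinom, gaussMultinomial]
  set m := ∑ i, α i with hm
  set t := n - m with htt
  have hmt : m + t = n := by omega
  have hTn : (∑ j ∈ range n, j) =
      ((∑ i, ∑ j ∈ range (α i), j) + (m * t + ∑ j ∈ range t, j)) + s2 α := by
    have h1 := T_add m t
    rw [hmt] at h1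
    have h2 := T_sum α
    rw [← hm] at h2
    omega
  have hblocks : (∏ i, ∏ j : Fin (α i), (q ^ α i - q ^ (j : ℕ))) =
      q ^ (∑ i, ∑ j ∈ range (α i), j) * ∏ i, qFact q (α i) := by
    calc (∏ i, ∏ j : Fin (α i), (q ^ α i - q ^ (j : ℕ)))
        = ∏ i, (q ^ (∑ j ∈ range (α i), j) * qFact q (α i)) :=
          Finset.prod_congr rfl fun i _ => hFin (α i)
      _ = (∏ i, q ^ (∑ j ∈ range (α i), j)) * ∏ i, qFact q (α i) := Finset.prod_mul_distrib
      _ = _ := by rw [Finset.prod_pow_eq_pow_sum]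
  rw [hblocks, hFin t, hFin n, hTn]
  have hfne : ∀ k : ℕ, ((qFact q k : ℚ)) ≠ 0 := fun k => by
    exact_mod_cast (qFact_pos hq2 k).ne'
  have hPFne : (∏ i, (qFact q (α i) : ℚ)) ≠ 0 := by
    rw [Finset.prod_ne_zero_iff]
    exact fun i _ => hfne _
  have hqne : ((q : ℚ)) ≠ 0 := by
    have : (0 : ℕ) < q := by omega
    exact_mod_cast this.ne'
  push_cast
  rw [pow_add, pow_add, pow_add]
  have h1 := hfne n
  have h2 := hfne m
  have h3 := hfne t
  field_simp

/-- Antichain case of the generalized Rota–Harper theorem for partial Meshalkin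
sequences: if `M` is a family of tuples `(a_1, …, a_p)` of subspaces with
`dim(a_1 + ⋯ + a_p) = ∑ dim a_i` and each `M_k` is an antichain, then
`∑_{a ∈ M} 1/([n choose r(â)]_q · [r(â); r(a)]_q · q^(s_2(r(a)))) ≤ 1`,
where `â = a_1 + ⋯ + a_p`. -/
theorem partial_meshalkin_antichain_lym (q n p : ℕ) (hp : 1 ≤ p)
    (F : Type*) [Field F] [Fintype F] (hq : Fintype.card F = q)
    (V : Type*) [AddCommGroup V] [Module F V] [FiniteDimensional F V]
    (hn : Module.finrank F V = n)
    (M : Finset (Fin p → Submodule F V))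
    (hmesh : ∀ a ∈ M,
      Module.finrank F ↥(⨆ i, a i) = ∑ i, Module.finrank F (a i))
    (hanti : ∀ k : Fin p,
      IsAntichain (· ≤ ·) {b : Submodule F V | ∃ a ∈ M, a k = b}) :
    ∑ a ∈ M, 1 / (gaussBinom q n (Module.finrank F ↥(⨆ i, a i)) *
        gaussMultinomial q (Module.finrank F ↥(⨆ i, a i))
          (fun i => Module.finrank F (a i)) *
        (q : ℚ) ^ (s2 (fun i => Module.finrank F (a i)))) ≤ 1 := by
  classical
  subst hq
  subst hn
  haveI : Finite V := Module.finite_of_finite F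
  haveI : Fintype V := Fintype.ofFinite V
  have hq2 : 2 ≤ Fintype.card F := Fintype.one_lt_card
  have key : ∀ a ∈ M, ∃ S : Finset (Fin (Module.finrank F V) → V),
      S.card = (∏ i, ∏ j : Fin (Module.finrank F (a i)),
            (Fintype.card F ^ Module.finrank F (a i) - Fintype.card F ^ (j : ℕ))) *
          (Fintype.card F ^ ((∑ i, Module.finrank F (a i)) *
              (Module.finrank F V - ∑ i, Module.finrank F (a i))) *
           ∏ j : Fin (Module.finrank F V - ∑ i, Module.finrank F (a i)),
            (Fintype.card F ^ (Module.finrank F V - ∑ i, Module.finrank F (a i)) -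
              Fintype.card F ^ (j : ℕ))) ∧
      ∀ v ∈ S, LinearIndependent F v ∧
        ∀ i : Fin p, a i = Submodule.span F (v '' {x : Fin (Module.finrank F V) |
          (∑ k ∈ univ.filter (fun k => k < i), Module.finrank F (a k)) ≤ (x : ℕ) ∧
          (x : ℕ) < (∑ k ∈ univ.filter (fun k => k < i), Module.finrank F (a k)) +
            Module.finrank F (a i)}) :=
    fun a ha => exists_block_finset a (hmesh a ha)
  choose! S hS1 hS2 using key
  set T : Finset (Fin (Module.finrank F V) → V) :=
    univ.filter (fun v => LinearIndependent F v) with hTdef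
  have hT : T.card = ∏ j : Fin (Module.finrank F V),
      (Fintype.card F ^ Module.finrank F V - Fintype.card F ^ (j : ℕ)) := by
    have h := card_linearIndependent (K := F) (V := V) (k := Module.finrank F V) le_rfl
    rw [Nat.card_eq_fintype_card] at h
    rw [hTdef, ← h]
    exact (Fintype.card_subtype _).symm
  have hdisj : ∀ a ∈ M, ∀ a' ∈ M, a ≠ a' → Disjoint (S a) (S a') := by
    intro a ha a' ha' hne
    rw [Finset.disjoint_left]
    intro v hv hv'
    have hKne : (univ.filter (fun i => a i ≠ a' i)).Nonempty := by
      obtain ⟨i, hi⟩ := Function.ne_iff.mp hne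
      exact ⟨i, mem_filter.mpr ⟨mem_univ _, hi⟩⟩
    set i₀ := (univ.filter (fun i => a i ≠ a' i)).min' hKne with hi₀d
    have hi₀mem : a i₀ ≠ a' i₀ :=
      (mem_filter.mp ((univ.filter (fun i => a i ≠ a' i)).min'_mem hKne)).2
    have hprev : ∀ k, k < i₀ → a k = a' k := by
      intro k hk
      by_contra hkne
      exact absurd (Finset.min'_le _ k (mem_filter.mpr ⟨mem_univ _, hkne⟩)) (not_le.mpr hk)
    have hβeq : (∑ k ∈ univ.filter (fun k => k < i₀), Module.finrank F (a k)) =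
        ∑ k ∈ univ.filter (fun k => k < i₀), Module.finrank F (a' k) :=
      Finset.sum_congr rfl fun k hk => by rw [hprev k (mem_filter.mp hk).2]
    have hha := ((hS2 a ha) v hv).2 i₀
    have hha' := ((hS2 a' ha') v hv').2 i₀
    rcases le_total (Module.finrank F (a i₀)) (Module.finrank F (a' i₀)) with hle | hle
    · refine absurd ?_ (hanti i₀ ⟨a, ha, rfl⟩ ⟨a', ha', rfl⟩ hi₀mem)
      rw [hha, hha']
      apply Submodule.span_mono
      apply Set.image_mono
      intro x hx
      simp only [Set.mem_setOf_eq] at hx ⊢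
      omega
    · refine absurd ?_ (hanti i₀ ⟨a', ha', rfl⟩ ⟨a, ha, rfl⟩ (Ne.symm hi₀mem))
      rw [hha, hha']
      apply Submodule.span_mono
      apply Set.image_mono
      intro x hx
      simp only [Set.mem_setOf_eq] at hx ⊢
      omega
  have hsub : M.biUnion S ⊆ T := by
    intro v hv
    obtain ⟨a, ha, hva⟩ := mem_biUnion.mp hv
    exact mem_filter.mpr ⟨mem_univ _, ((hS2 a ha) v hva).1⟩
  have hsum : ∑ a ∈ M, (S a).card ≤ T.card :=
    le_trans (le_of_eq (Finset.card_biUnion hdisj).symm) (Finset.card_le_card hsub)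
  have hTpos : 0 < T.card := by
    rw [hT]
    apply Finset.prod_pos
    intro j _
    have : Fintype.card F ^ (j : ℕ) < Fintype.card F ^ Module.finrank F V :=
      Nat.pow_lt_pow_right (by omega) j.isLt
    omega
  calc ∑ a ∈ M, 1 / (gaussBinom (Fintype.card F) (Module.finrank F V)
          (Module.finrank F ↥(⨆ i, a i)) *
        gaussMultinomial (Fintype.card F) (Module.finrank F ↥(⨆ i, a i))
          (fun i => Module.finrank F (a i)) *
        ((Fintype.card F : ℚ)) ^ (s2 (fun i => Module.finrank F (a i))))
      = ∑ a ∈ M, ((S a).card : ℚ) / (T.card : ℚ) := by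
        refine Finset.sum_congr rfl fun a ha => ?_
        rw [hS1 a ha, hT, hmesh a ha]
        exact final_algebra hq2 (fun i => Module.finrank F (a i))
          (le_trans (le_of_eq (hmesh a ha).symm) (Submodule.finrank_le _))
    _ = (∑ a ∈ M, ((S a).card : ℚ)) / (T.card : ℚ) := by rw [Finset.sum_div]
    _ ≤ 1 := by
        rw [div_le_one (by exact_mod_cast hTpos)]
        exact_mod_cast hsum
end
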